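/- arXiv:2604.05618 — 3 statements merged into one kernel-verified Lean document; each statement's English description precedes it below -/
import Mathlib

section
/- Let G be a finite abelian group, H a subgroup of G, g ∈ G, and let r be the order of the image of g in the quotient group G/H. Then for every z ∈ ℂ, the product over all group homomorphisms χ : G → ℂˣ that are trivial on H of (1 − χ(g)·z) equals (1 − z^r)^{([G : H])/r}. -/
/-!
Characters of `G` trivial on `H` are the characters of `Q = G ⧸ H`. Evaluation at `q = gH` is a
homomorphism from the dual group of `Q` to `ℂˣ`; its kernel is the dual of `Q ⧸ ⟨q⟩`, of order
`[G : H] / r`, so its image has order `r`. The image is therefore the group of `r`-th roots of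
unity, each value being taken `[G : H] / r` times, and `∏_{ζ^r = 1} (1 - ζ z) = 1 - z^r`.
-/

open Finset MonoidHom

-- `S` is cyclic, so a generator is a primitive `|S|`-th root of unity and `S` is all of them.
theorem Subgroup.prod_one_sub_val_mul_eq_one_sub_pow_card {R : Type*} [CommRing R] [IsDomain R]
    (S : Subgroup Rˣ) [Fintype S] (z : R) :
    ∏ ζ : S, (1 - ((ζ : Rˣ) : R) * z) = 1 - z ^ Nat.card S := by
  obtain ⟨ζ₀, hζ₀⟩ := IsCyclic.exists_ofOrder_eq_natCard (α := S)
  have hpos : 0 < Nat.card S := Nat.card_pos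
  have hprim : IsPrimitiveRoot ((ζ₀ : Rˣ) : R) (Nat.card S) := by
    rw [← hζ₀, ← Subgroup.orderOf_coe, ← orderOf_units]
    exact IsPrimitiveRoot.orderOf _
  have hroots := hprim.pow_sub_pow_eq_prod_sub_mul 1 z hpos
  rw [one_pow] at hroots
  rw [hroots]
  refine Finset.prod_nbij (fun ζ : S => ((ζ : Rˣ) : R)) (fun ζ _ => ?_)
    (fun ζ _ ξ _ h => Subtype.ext (Units.ext h)) (fun ξ hξ => ?_) fun _ _ => rfl
  · rw [Polynomial.mem_nthRootsFinset hpos, ← Units.val_pow_eq_pow_val, ← Subgroup.coe_pow,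
      pow_card_eq_one', Subgroup.coe_one, Units.val_one]
  · obtain ⟨i, -, hi⟩ :=
      hprim.eq_pow_of_pow_eq_one ((Polynomial.mem_nthRootsFinset hpos 1).mp hξ)
    exact ⟨ζ₀ ^ i, Finset.mem_coe.mpr (mem_univ _), by simpa using hi⟩

theorem MonoidHom.prod_comp_eq_prod_range_pow_card_ker {K L M : Type*} [Group K] [Fintype K]
    [Group L] [CommMonoid M] (f : K →* L) [Fintype f.range] (F : L → M) :
    ∏ x, F (f x) = ∏ y : f.range, F y ^ Nat.card f.ker := by
  classical
  rw [← Finset.prod_fiberwise Finset.univ f.rangeRestrict]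
  refine Fintype.prod_congr _ _ fun y => ?_
  obtain ⟨a, ha⟩ := f.rangeRestrict_surjective y
  have hfiber : #{x | f.rangeRestrict x = y} = Nat.card f.ker := by
    rw [← Nat.card_congr (f.fiberEquivKer a), ← Nat.card_eq_finsetCard]
    exact Nat.card_congr <| Equiv.subtypeEquivRight fun x => by
      simp [← ha, Subtype.ext_iff]
  rw [← hfiber]
  exact Finset.prod_eq_pow_card fun x hx => by
    rw [← (mem_filter.mp hx).2]; rfl

theorem MonoidHom.prod_one_sub_apply_mul_eq_one_sub_pow {K R : Type*} [Group K] [Fintype K]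
    [CommRing R] [IsDomain R] (ψ : K →* Rˣ) [Fintype ψ.range] (z : R) :
    ∏ x, (1 - (ψ x : R) * z) = (1 - z ^ Nat.card ψ.range) ^ Nat.card ψ.ker := by
  rw [ψ.prod_comp_eq_prod_range_pow_card_ker (fun ζ : Rˣ => 1 - (ζ : R) * z), Finset.prod_pow,
    ψ.range.prod_one_sub_val_mul_eq_one_sub_pow_card]

theorem MonoidHom.ker_eval_eq_ker_domRestrictHom_zpowers {G N : Type*} [Group G] [CommGroup N]
    (a : G) : (eval (N := N) a).ker = (domRestrictHom (Subgroup.zpowers a) N).ker := by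
  ext χ
  rw [mem_ker, mem_ker, domRestrictHom_apply, domRestrict_eq_one_iff]
  exact ⟨fun h _ hx => (Subgroup.zpowers_le (H := χ.ker)).mpr h hx,
    fun h => h a (Subgroup.mem_zpowers a)⟩

namespace CommGroup

variable {G M : Type*} [CommGroup G] [Finite G] [CommMonoid M]
  [HasEnoughRootsOfUnity M (Monoid.exponent G)]

theorem card_ker_eval (a : G) :
    Nat.card (eval (N := Mˣ) a).ker = Nat.card G / orderOf a := by
  rw [ker_eval_eq_ker_domRestrictHom_zpowers, card_domRestrictHom_ker, ← Subgroup.index,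
    ← Subgroup.card_mul_index (Subgroup.zpowers a), Nat.card_zpowers,
    Nat.mul_div_cancel_left _ (orderOf_pos a)]

theorem card_range_eval (a : G) :
    Nat.card (eval (N := Mˣ) a).range = orderOf a := by
  have hmul := (eval (N := Mˣ) a).ker.card_mul_index
  rw [Subgroup.index_ker, card_ker_eval, card_monoidHom_of_hasEnoughRootsOfUnity] at hmul
  obtain ⟨k, hk⟩ := orderOf_dvd_natCard a
  have hk0 : 0 < k := Nat.pos_of_mul_pos_left (hk ▸ Nat.card_pos)
  rw [hk, Nat.mul_div_cancel_left _ (orderOf_pos a), mul_comm (orderOf a)] at hmul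
  exact Nat.eq_of_mul_eq_mul_left hk0 hmul

end CommGroup

/-- Lemma 4.2 for characters trivial on a subgroup: let `G` be a finite abelian group,
`H ≤ G`, `g ∈ G`, and `r` the order of the image of `g` in `G ⧸ H`. Then for every
`z ∈ ℂ`, the product over all characters `χ : G →* ℂˣ` trivial on `H` of `(1 − χ(g)·z)`
equals `(1 − z^r)^([G:H]/r)`. -/
theorem prod_characters_trivial_on_subgroup {G : Type*} [CommGroup G] [Finite G]
    (H : Subgroup G) (g : G) (r : ℕ)
    (hr : orderOf (QuotientGroup.mk g : G ⧸ H) = r) (z : ℂ) :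
    (∏ᶠ χ : {χ : G →* ℂˣ // ∀ h ∈ H, χ h = 1}, (1 - ((χ : G →* ℂˣ) g : ℂ) * z))
      = (1 - z ^ r) ^ (H.index / r) := by
  classical
  have : Fintype (G ⧸ H →* ℂˣ) := Fintype.ofFinite _
  let e : {χ : G →* ℂˣ // ∀ h ∈ H, χ h = 1} ≃ (G ⧸ H →* ℂˣ) :=
    (Equiv.subtypeEquivRight fun χ => by
      rw [mem_ker, domRestrictHom_apply, domRestrict_eq_one_iff]).trans
      (domRestrictHomKerEquiv ℂˣ H).toEquiv
  rw [← finprod_comp_equiv e.symm, finprod_eq_prod_of_fintype]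
  have hprod := (eval (N := ℂˣ) (g : G ⧸ H)).prod_one_sub_apply_mul_eq_one_sub_pow z
  rwa [CommGroup.card_range_eval, CommGroup.card_ker_eval, hr] at hprod
end

section
/- Let m ≥ 1 and let p be an integer coprime to m, with r the multiplicative order of p modulo m. Then for every z ∈ ℂ, the product over all Dirichlet characters χ modulo m with values in ℂ of (1 − χ(p)·z) equals (1 − z^r)^{φ(m)/r}, where φ is Euler's totient function. -/
/-!
Evaluation at `g` maps the character group `G →* Kˣ` homomorphically onto the group of
`r`-th roots of unity, `r = orderOf g`: its image `H` lies in that group of order `r`, and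
`r ∣ |H|` because every character kills `g ^ |H|` while characters separate points. All fibres
of a homomorphism have the same size, here `|G| / r`, so the product is
`(∏_{ζ^r = 1} (1 - ζ z)) ^ (|G| / r)`, and `∏_{ζ^r = 1} (1 - ζ z) = 1 - z ^ r`. Dirichlet
characters modulo `m` are the characters of `(ZMod m)ˣ`.
-/

open Finset Polynomial

theorem MonoidHom.prod_comp_eq_prod_image_pow {G M N : Type*} [Group G] [Fintype G] [Monoid M]
    [DecidableEq M] [CommMonoid N] (f : G →* M) (F : M → N) :
    ∏ x, F (f x) = ∏ y ∈ univ.image f, F y ^ (Fintype.card G / #(univ.image f)) := by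
  have hfiber : ∀ y ∈ univ.image f, #{x | f x = y} = #{x | f x = 1} := fun y hy ↦
    card_fiber_eq_of_mem_range f (by simpa using hy) ⟨1, map_one f⟩
  have hcard : Fintype.card G = #(univ.image f) * #{x | f x = 1} := by
    rw [← card_univ, card_eq_sum_card_image f, sum_congr rfl hfiber, sum_const, smul_eq_mul]
  rw [Finset.prod_comp]
  refine prod_congr rfl fun y hy ↦ ?_
  rw [hfiber y hy, hcard, Nat.mul_div_cancel_left _ (card_pos.mpr (univ_nonempty.image f))]

namespace CommGroup

variable {G K : Type*} [CommGroup G] [Finite G]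

theorem orderOf_dvd_card_range_eval [CommMonoid K] [HasEnoughRootsOfUnity K (Monoid.exponent G)]
    (g : G) : orderOf g ∣ Nat.card (MonoidHom.eval g : (G →* Kˣ) →* Kˣ).range := by
  refine orderOf_dvd_of_pow_eq_one <| (forall_apply_eq_apply_iff G (M := K)).mp fun φ ↦ ?_
  have h : (⟨φ g, φ, rfl⟩ : (MonoidHom.eval g : (G →* Kˣ) →* Kˣ).range) ^ _ = 1 :=
    pow_card_eq_one'
  rw [map_pow, map_one]
  exact congrArg Subtype.val h

variable [CommRing K] [IsDomain K] [HasEnoughRootsOfUnity K (Monoid.exponent G)]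

theorem range_eval_eq_rootsOfUnity (g : G) :
    (MonoidHom.eval g : (G →* Kˣ) →* Kˣ).range = rootsOfUnity (orderOf g) K := by
  have : NeZero (orderOf g) := ⟨(orderOf_pos g).ne'⟩
  refine Subgroup.eq_of_le_of_card_ge ?_ ?_
  · rintro _ ⟨φ, rfl⟩
    rw [mem_rootsOfUnity]
    exact (map_pow φ g _).symm.trans (by rw [pow_orderOf_eq_one, map_one])
  · have : Finite (MonoidHom.eval g : (G →* Kˣ) →* Kˣ).range :=
      .of_surjective (MonoidHom.eval g : (G →* Kˣ) →* Kˣ).rangeRestrict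
        (MonoidHom.rangeRestrict_surjective _)
    exact (card_rootsOfUnity K _).trans
      (Nat.le_of_dvd Nat.card_pos (orderOf_dvd_card_range_eval g))

theorem image_apply_eq_nthRootsFinset [Fintype (G →* Kˣ)] [DecidableEq K] (g : G) :
    univ.image (fun φ : G →* Kˣ ↦ (φ g : K)) = nthRootsFinset (orderOf g) (1 : K) := by
  have : NeZero (orderOf g) := ⟨(orderOf_pos g).ne'⟩
  ext ζ
  rw [mem_image, mem_nthRootsFinset (orderOf_pos g)]
  constructor
  · rintro ⟨φ, -, rfl⟩
    rw [← Units.val_pow_eq_pow_val, ← map_pow, pow_orderOf_eq_one, map_one, Units.val_one]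
  · intro hζ
    obtain ⟨φ, hφ⟩ :=
      (range_eval_eq_rootsOfUnity (K := K) g).ge (rootsOfUnity.mkOfPowEq ζ hζ).2
    exact ⟨φ, mem_univ φ, congrArg Units.val hφ⟩

theorem finprod_one_sub_apply_mul (g : G) (z : K) :
    ∏ᶠ φ : G →* Kˣ, (1 - φ g * z) = (1 - z ^ orderOf g) ^ (Nat.card G / orderOf g) := by
  classical
  have := Fintype.ofFinite (G →* Kˣ)
  have : HasEnoughRootsOfUnity K (orderOf g) := .of_dvd K (Monoid.order_dvd_exponent g)
  obtain ⟨ζ, hζ⟩ := HasEnoughRootsOfUnity.exists_primitiveRoot K (orderOf g)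
  let f : (G →* Kˣ) →* K := (Units.coeHom K).comp (MonoidHom.eval g)
  have hf : univ.image f = nthRootsFinset (orderOf g) (1 : K) := image_apply_eq_nthRootsFinset g
  rw [finprod_eq_prod_of_fintype]
  calc ∏ φ : G →* Kˣ, (1 - f φ * z)
      = ∏ ζ ∈ nthRootsFinset (orderOf g) (1 : K), (1 - ζ * z) ^ (Nat.card G / orderOf g) := by
        rw [f.prod_comp_eq_prod_image_pow (fun x ↦ 1 - x * z), hf, hζ.card_nthRootsFinset,
          ← Nat.card_eq_fintype_card, card_monoidHom_of_hasEnoughRootsOfUnity]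
    _ = (1 - z ^ orderOf g) ^ (Nat.card G / orderOf g) := by
        rw [prod_pow, ← hζ.pow_sub_pow_eq_prod_sub_mul 1 z (orderOf_pos g), one_pow]

end CommGroup

/-- Lemma 4.2 for Dirichlet characters: let `m ≥ 1`, `p` an integer coprime to `m`, and
`r` the multiplicative order of `p` modulo `m`. Then for every `z ∈ ℂ`, the product over
all Dirichlet characters `χ` modulo `m` of `(1 − χ(p)·z)` equals `(1 − z^r)^(φ(m)/r)`. -/
theorem prod_dirichletCharacters_one_sub_mul (m : ℕ) (hm : 0 < m)
    (p : ℤ) (hp : IsCoprime p (m : ℤ)) (r : ℕ)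
    (hr : orderOf ((p : ZMod m)) = r) (z : ℂ) :
    (∏ᶠ χ : DirichletCharacter ℂ m, (1 - χ (p : ZMod m) * z))
      = (1 - z ^ r) ^ (Nat.totient m / r) := by
  have : NeZero m := ⟨hm.ne'⟩
  let u := ZMod.unitOfIsCoprime p hp
  have hu : orderOf u = r := by rw [← hr, ← orderOf_units]; rfl
  calc ∏ᶠ χ : DirichletCharacter ℂ m, (1 - χ (p : ZMod m) * z)
      = ∏ᶠ φ : (ZMod m)ˣ →* ℂˣ, (1 - φ u * z) :=
        finprod_comp_equiv MulChar.mulEquivToUnitHom.toEquiv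
          (f := fun φ : (ZMod m)ˣ →* ℂˣ ↦ 1 - (φ u : ℂ) * z)
    _ = (1 - z ^ r) ^ (Nat.totient m / r) := by
        rw [CommGroup.finprod_one_sub_apply_mul, hu, Nat.card_eq_fintype_card,
          ZMod.card_units_eq_totient]
end

section
/- Let G be a finite abelian group, g ∈ G an element of order r, and λ₁, λ₂, t ∈ ℂ. Then the product over all group homomorphisms χ : G → ℂˣ of (1 − (λ₁ + λ₂)·χ(g)·t + λ₁λ₂·(χ(g)·t)²) equals ((1 − λ₁^r·t^r)·(1 − λ₂^r·t^r))^{|G|/r}. -/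
/-!
Evaluation at `g` is a homomorphism from the character group onto the `r`-th roots of unity:
its image consists of `r`-th roots of unity, and it cannot be smaller, since characters separate
points and so the exponent of the image kills `g`. As the character group has order `|G|`, every
root of unity is then hit by exactly `|G| / r` characters. Each quadratic factor splits as
`(1 - ζ λ₁ t)(1 - ζ λ₂ t)`, and `∏_{ζ^r = 1} (1 - ζ x) = 1 - x^r`.
-/

open Finset Polynomial

instance orderOf.neZero_of_finite {G : Type*} [LeftCancelMonoid G] [Finite G] (g : G) :
    NeZero (orderOf g) :=
  ⟨(orderOf_pos g).ne'⟩

theorem MonoidHom.finprod_comp_eq_finprod_range_pow {A B M : Type*} [Group A] [Finite A]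
    [Group B] [CommMonoid M] (φ : A →* B) (f : B → M) :
    ∏ᶠ a, f (φ a) = (∏ᶠ b : φ.range, f b) ^ Nat.card φ.ker := by
  classical
  have := Fintype.ofFinite A
  rw [finprod_eq_prod_of_fintype, finprod_eq_prod_of_fintype,
    ← prod_subtype (univ.image φ) (by simp [eq_comm]), Finset.prod_comp, ← prod_pow]
  refine prod_congr rfl fun b hb => ?_
  have hfiber : #{a | φ a = b} = #{a | φ a = 1} :=
    card_fiber_eq_of_mem_range φ (by simpa using hb) ⟨1, map_one φ⟩
  rw [hfiber, Nat.card_eq_fintype_card, Fintype.card_subtype]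
  simp only [MonoidHom.mem_ker]

theorem finprod_rootsOfUnity_eq_prod_nthRootsFinset {R M : Type*} [CommRing R] [IsDomain R]
    [CommMonoid M] (n : ℕ) [NeZero n] (f : R → M) :
    ∏ᶠ ζ : rootsOfUnity n R, f ((ζ : Rˣ) : R) = ∏ z ∈ nthRootsFinset n (1 : R), f z := by
  have := Fintype.ofFinite (rootsOfUnity n R)
  rw [finprod_eq_prod_of_fintype]
  refine prod_bij (fun ζ _ => ((ζ : Rˣ) : R)) (fun ζ _ => ?_) (fun ζ _ ξ _ h => ?_)
    (fun z hz => ?_) (fun _ _ => rfl)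
  · rw [mem_nthRootsFinset (NeZero.pos n), ← Units.val_pow_eq_pow_val,
      (mem_rootsOfUnity n _).mp ζ.2, Units.val_one]
  · exact Subtype.ext (Units.ext h)
  · rw [mem_nthRootsFinset (NeZero.pos n)] at hz
    exact ⟨rootsOfUnity.mkOfPowEq z hz, mem_univ _, rootsOfUnity.val_mkOfPowEq_coe z hz⟩

theorem finprod_one_sub_mul_rootsOfUnity {R : Type*} [CommRing R] [IsDomain R]
    (n : ℕ) [NeZero n] [HasEnoughRootsOfUnity R n] (a : R) :
    ∏ᶠ ζ : rootsOfUnity n R, (1 - ((ζ : Rˣ) : R) * a) = 1 - a ^ n := by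
  obtain ⟨ζ, hζ⟩ := HasEnoughRootsOfUnity.exists_primitiveRoot R n
  rw [finprod_rootsOfUnity_eq_prod_nthRootsFinset n (fun z => 1 - z * a),
    ← hζ.pow_sub_pow_eq_prod_sub_mul 1 a (NeZero.pos n), one_pow]

section Characters

variable {G M : Type*} [CommGroup G] [Finite G] [CommMonoid M]
  [HasEnoughRootsOfUnity M (Monoid.exponent G)]

theorem MonoidHom.range_eval_eq_rootsOfUnity (g : G) :
    (MonoidHom.eval (N := Mˣ) g).range = rootsOfUnity (orderOf g) M := by
  have := HasEnoughRootsOfUnity.of_dvd M (Monoid.order_dvd_exponent g)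
  have hle : (MonoidHom.eval (N := Mˣ) g).range ≤ rootsOfUnity (orderOf g) M := by
    rintro _ ⟨χ, rfl⟩
    simp [mem_rootsOfUnity, ← map_pow, pow_orderOf_eq_one]
  have : Finite (MonoidHom.eval (N := Mˣ) g).range :=
    .of_injective _ (Subgroup.inclusion_injective hle)
  refine Subgroup.eq_of_le_of_card_ge hle ?_
  rw [HasEnoughRootsOfUnity.natCard_rootsOfUnity]
  refine Nat.le_of_dvd Nat.card_pos (orderOf_dvd_of_pow_eq_one ?_)
  rw [← CommGroup.forall_apply_eq_apply_iff G (M := M)]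
  intro χ
  simpa using congrArg Subtype.val
    (pow_card_eq_one' (x := (⟨χ g, χ, rfl⟩ : (MonoidHom.eval (N := Mˣ) g).range)))

theorem CommGroup.finprod_apply_eq_finprod_rootsOfUnity_pow {N : Type*} [CommMonoid N]
    (g : G) (f : Mˣ → N) :
    ∏ᶠ χ : G →* Mˣ, f (χ g) =
      (∏ᶠ ζ : rootsOfUnity (orderOf g) M, f ζ) ^ (Nat.card G / orderOf g) := by
  have := HasEnoughRootsOfUnity.of_dvd M (Monoid.order_dvd_exponent g)
  have : Finite (G →* Mˣ) :=
    .of_equiv _ (monoidHom_mulEquiv_of_hasEnoughRootsOfUnity G M).some.symm.toEquiv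
  have hcard : Nat.card G = orderOf g * Nat.card (MonoidHom.eval (N := Mˣ) g).ker := by
    rw [← card_monoidHom_of_hasEnoughRootsOfUnity G M,
      ← (MonoidHom.eval (N := Mˣ) g).ker.index_mul_card, Subgroup.index_ker,
      MonoidHom.range_eval_eq_rootsOfUnity, HasEnoughRootsOfUnity.natCard_rootsOfUnity]
  calc ∏ᶠ χ : G →* Mˣ, f (χ g)
      = (∏ᶠ ζ : (MonoidHom.eval (N := Mˣ) g).range, f ζ) ^
          Nat.card (MonoidHom.eval (N := Mˣ) g).ker :=
        (MonoidHom.eval g).finprod_comp_eq_finprod_range_pow f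
    _ = _ := by
        rw [MonoidHom.range_eval_eq_rootsOfUnity, hcard,
          Nat.mul_div_cancel_left _ (orderOf_pos g)]

end Characters

/-- Character-product factorization of quadratic Euler factors: for a finite abelian group
`G`, `g ∈ G` of order `r`, and `λ₁, λ₂, t ∈ ℂ`, the product over all characters
`χ : G →* ℂˣ` of `(1 − (λ₁+λ₂)·χ(g)·t + λ₁λ₂·(χ(g)·t)²)` equals
`((1 − λ₁^r t^r)(1 − λ₂^r t^r))^(|G|/r)`. -/
theorem prod_characters_quadratic_factors {G : Type*} [CommGroup G] [Finite G]
    (g : G) (r : ℕ) (hr : orderOf g = r) (l₁ l₂ t : ℂ) :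
    (∏ᶠ χ : G →* ℂˣ,
        (1 - (l₁ + l₂) * ((χ g : ℂ) * t) + l₁ * l₂ * ((χ g : ℂ) * t) ^ 2))
      = ((1 - l₁ ^ r * t ^ r) * (1 - l₂ ^ r * t ^ r)) ^ (Nat.card G / r) := by
  subst hr
  have hfactor : ∀ z : ℂ, 1 - (l₁ + l₂) * (z * t) + l₁ * l₂ * (z * t) ^ 2 =
      (1 - z * (l₁ * t)) * (1 - z * (l₂ * t)) := fun z => by ring
  simp only [hfactor]
  rw [CommGroup.finprod_apply_eq_finprod_rootsOfUnity_pow g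
      (fun z : ℂˣ => (1 - (z : ℂ) * (l₁ * t)) * (1 - (z : ℂ) * (l₂ * t))),
    finprod_mul_distrib (Set.toFinite _) (Set.toFinite _), finprod_one_sub_mul_rootsOfUnity,
    finprod_one_sub_mul_rootsOfUnity, mul_pow l₁, mul_pow l₂, mul_pow]
end
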